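/- arXiv:2105.11008 — 3 statements merged into one kernel-verified Lean document; each statement's English description precedes it below -/
import Mathlib

section
/- Let q be an odd prime power and G = SL_2(F_q). Then G has exactly q + 4 conjugacy classes. -/
open Matrix Polynomial

set_option linter.unusedSectionVars false
set_option maxHeartbeats 1000000

namespace SL2CC

variable {F : Type*} [Field F] [Fintype F]

abbrev SL2 (F : Type*) [CommRing F] := Matrix.SpecialLinearGroup (Fin 2) F

def Cm (t : F) : SL2 F := ⟨!![0, -1; 1, t], by simp [Matrix.det_fin_two_of]⟩

def Tm (b : F) : SL2 F := ⟨!![1, b; 0, 1], by simp [Matrix.det_fin_two_of]⟩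

lemma isConj_of_semiconj (g h : SL2 F) (P : Matrix (Fin 2) (Fin 2) F) (hP : P.det = 1)
    (hc : P * (g : Matrix (Fin 2) (Fin 2) F) = (h : Matrix (Fin 2) (Fin 2) F) * P) :
    IsConj g h := by
  rw [isConj_iff]
  refine ⟨⟨P, hP⟩, ?_⟩
  apply mul_inv_eq_of_eq_mul
  apply Subtype.ext
  exact hc

lemma exists_sol (hodd : ringChar F ≠ 2) {α β : F} (hα : α ≠ 0) (hβ : β ≠ 0) :
    ∃ x y : F, α * x ^ 2 + β * y ^ 2 = 1 := by
  obtain ⟨a, b, hab⟩ := FiniteField.exists_root_sum_quadratic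
    (f := C α * X ^ 2) (g := C β * X ^ 2 - 1)
    (by rw [degree_C_mul hα, degree_X_pow]; rfl)
    (by
      rw [degree_sub_eq_left_of_degree_lt (by
        rw [degree_C_mul hβ, degree_X_pow]
        exact lt_of_le_of_lt degree_one_le (by norm_num)), degree_C_mul hβ, degree_X_pow]
      rfl)
    (FiniteField.odd_card_of_char_ne_two hodd)
  refine ⟨a, b, ?_⟩
  simp only [eval_add, eval_mul, eval_pow, eval_C, eval_X, eval_sub, eval_one] at hab
  linear_combination hab


lemma exists_rep (h2 : ringChar F ≠ 2) (a b c d : F) (hdet : a * d - b * c = 1)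
    (h4 : (a + d) ^ 2 ≠ 4) : ∃ x y : F, c * x ^ 2 + (d - a) * (x * y) - b * y ^ 2 = 1 := by
  by_cases hc : c = 0
  · subst hc
    have had : a ≠ d := by
      rintro rfl
      apply h4
      linear_combination 4 * hdet
    refine ⟨(1 + b) / (d - a), 1, ?_⟩
    have : d - a ≠ 0 := sub_ne_zero.2 had.symm
    field_simp
    ring
  · have h20 : (2 : F) ≠ 0 := Ring.two_ne_zero h2
    have h40 : (4 : F) ≠ 0 := by
      intro h'
      apply h20
      have h'' : (2 : F) * 2 = 0 := by linear_combination h'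
      rcases mul_eq_zero.1 h'' with h3 | h3 <;> exact h3
    have hβ : -((a + d) ^ 2 - 4) / (4 * c) ≠ 0 := by
      apply div_ne_zero
      · intro h
        apply h4
        linear_combination -h
      · exact mul_ne_zero h40 hc
    obtain ⟨u, w, huw⟩ := exists_sol h2 hc hβ
    refine ⟨u - (d - a) * w / (2 * c), w, ?_⟩
    have h2c : (2 : F) * c ≠ 0 := mul_ne_zero h20 hc
    have h4c : (4 : F) * c ≠ 0 := mul_ne_zero h40 hc
    rw [div_mul_eq_mul_div] at huw
    field_simp at huw
    field_simp
    linear_combination huw + (4*w^2) * hdet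

lemma conj_companion (h2 : ringChar F ≠ 2) (g : SL2 F)
    (h4 : (Matrix.trace (g : Matrix (Fin 2) (Fin 2) F)) ^ 2 ≠ 4) :
    IsConj g (Cm (Matrix.trace (g : Matrix (Fin 2) (Fin 2) F))) := by
  set M := (g : Matrix (Fin 2) (Fin 2) F) with hM
  set a := M 0 0; set b := M 0 1; set c := M 1 0; set d := M 1 1
  have hdet : a * d - b * c = 1 := by
    have := g.2; rwa [Matrix.det_fin_two] at this
  have htr : Matrix.trace M = a + d := Matrix.trace_fin_two M
  rw [htr] at h4 ⊢
  obtain ⟨x, y, hxy⟩ := exists_rep h2 a b c d hdet h4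
  refine (isConj_of_semiconj (Cm (a + d)) g !![x, a*x+b*y; y, c*x+d*y] ?_ ?_).symm
  · rw [Matrix.det_fin_two_of]; linear_combination hxy
  · have hg : M = !![a, b; c, d] := Matrix.eta_fin_two M
    show _ * ((Cm (a+d) : SL2 F) : Matrix (Fin 2) (Fin 2) F) = M * _
    rw [hg]
    show _ * !![0, -1; 1, a + d] = _
    ext i j
    fin_cases i <;> fin_cases j <;>
      simp [Matrix.mul_apply, Fin.sum_univ_succ] <;>
      first
        | ring1
        | linear_combination x * hdet
        | linear_combination y * hdet
        | linear_combination (-x) * hdet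
        | linear_combination (-y) * hdet
        | linear_combination (x*a+y*b) * hdet
        | linear_combination (-(x*a+y*b)) * hdet
        | linear_combination (x*c+y*d) * hdet
        | linear_combination (-(x*c+y*d)) * hdet

lemma exists_sq_mul (h2 : ringChar F ≠ 2) {ε f : F} (hε : ¬IsSquare ε) (hf : f ≠ 0) :
    ∃ l : F, l ≠ 0 ∧ (l ^ 2 * f = 1 ∨ l ^ 2 * f = ε) := by
  have hε0 : ε ≠ 0 := fun h => hε (h ▸ ⟨0, by simp⟩)
  by_cases hsf : IsSquare f⁻¹
  · obtain ⟨s, hs⟩ := hsf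
    have hs0 : s ≠ 0 := by rintro rfl; simp at hs; exact hf hs
    refine ⟨s, hs0, Or.inl ?_⟩
    rw [sq, ← hs]; field_simp
  · have hfi : f⁻¹ ≠ 0 := inv_ne_zero hf
    have h1 : f⁻¹ ^ (Fintype.card F / 2) = -1 := by
      rcases FiniteField.pow_dichotomy h2 hfi with h | h
      · exact absurd ((FiniteField.isSquare_iff h2 hfi).2 h) hsf
      · exact h
    have h2' : ε ^ (Fintype.card F / 2) = -1 := by
      rcases FiniteField.pow_dichotomy h2 hε0 with h | h
      · exact absurd ((FiniteField.isSquare_iff h2 hε0).2 h) hε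
      · exact h
    have hprod : IsSquare (ε * f⁻¹) := by
      refine (FiniteField.isSquare_iff h2 (mul_ne_zero hε0 hfi)).2 ?_
      rw [mul_pow, h1, h2']; ring
    obtain ⟨s, hs⟩ := hprod
    have hs0 : s ≠ 0 := by
      rintro rfl; rw [mul_zero] at hs; exact (mul_ne_zero hε0 hfi) hs
    refine ⟨s, hs0, Or.inr ?_⟩
    rw [sq, ← hs]; field_simp


lemma conj_unipotent (h2 : ringChar F ≠ 2) {ε : F} (hε : ¬IsSquare ε) (g : SL2 F)
    (htr : Matrix.trace (g : Matrix (Fin 2) (Fin 2) F) = 2) (hg : g ≠ 1) :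
    IsConj g (Tm 1) ∨ IsConj g (Tm ε) := by
  set M := (g : Matrix (Fin 2) (Fin 2) F) with hM
  set a := M 0 0; set b := M 0 1; set c := M 1 0; set d := M 1 1
  have hdet : a * d - b * c = 1 := by
    have := g.2; rwa [Matrix.det_fin_two] at this
  have htr2 : a + d = 2 := by rwa [Matrix.trace_fin_two] at htr
  have hMeta : M = !![a, b; c, d] := Matrix.eta_fin_two M
  by_cases hc : c = 0
  · have ha : a = 1 := by
      have h1 : (a - 1) ^ 2 = 0 := by
        linear_combination (-1 : F) * hdet + a * htr2 + (-b) * hc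
      have := pow_eq_zero_iff (n := 2) (by norm_num) |>.1 h1
      exact sub_eq_zero.1 this
    have hd : d = 1 := by linear_combination htr2 - ha
    have hb : b ≠ 0 := by
      intro hb0
      apply hg
      apply Subtype.ext
      show M = 1
      rw [hMeta, ha, hd, hb0, hc, Matrix.one_fin_two]
    obtain ⟨l, hl0, hl⟩ := exists_sq_mul h2 hε hb
    set β := l ^ 2 * b with hβ
    have key : IsConj g (Tm β) := by
      refine (isConj_of_semiconj (Tm β) g !![l⁻¹, 0; 0, l] ?_ ?_).symm
      · rw [Matrix.det_fin_two_of]; field_simp; simp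
      · show _ * ((Tm β : SL2 F) : Matrix (Fin 2) (Fin 2) F) = M * _
        rw [hMeta, ha, hd, hc]
        show _ * !![1, β; 0, 1] = _
        ext i j
        fin_cases i <;> fin_cases j <;>
          simp [Matrix.mul_apply, Fin.sum_univ_succ, hβ] <;>
          field_simp <;> ring1
    rcases hl with h | h
    · left; rwa [show β = 1 from h] at key
    · right; rwa [show β = ε from h] at key
  · obtain ⟨l, hl0, hl⟩ := exists_sq_mul h2 hε (neg_ne_zero.2 hc)
    set β := l ^ 2 * -c with hβ
    have key : IsConj g (Tm β) := by
      refine (isConj_of_semiconj (Tm β) g !![-(a-1) * (l*c)⁻¹, l; -l⁻¹, 0] ?_ ?_).symm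
      · rw [Matrix.det_fin_two_of]; field_simp; ring
      · show _ * ((Tm β : SL2 F) : Matrix (Fin 2) (Fin 2) F) = M * _
        rw [hMeta]
        show _ * !![1, β; 0, 1] = _
        ext i j
        fin_cases i <;> fin_cases j <;>
          simp [Matrix.mul_apply, Fin.sum_univ_succ, hβ] <;>
          field_simp <;>
          first
            | ring1
            | linear_combination hdet
            | linear_combination (-1 : F) * hdet
            | linear_combination htr2
            | linear_combination (-1 : F) * htr2
            | linear_combination l * htr2
            | linear_combination (-l) * htr2
            | linear_combination (l*c) * hdet + (l*c*a) * htr2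
            | linear_combination (-(l*c)) * hdet + (-(l*c*a)) * htr2
            | linear_combination (-(c*l^2)) * hdet + (a*c*l^2) * htr2
            | linear_combination (c*l^2) * hdet + (-(a*c*l^2)) * htr2
            | linear_combination (c*l) * htr2
            | linear_combination (-(c*l)) * htr2
            | linear_combination (c*l^2) * htr2
            | linear_combination (-(c*l^2)) * htr2
            | linear_combination (-1 : F) * hdet + a * htr2
            | skip
    rcases hl with h | h
    · left; rwa [show β = 1 from h] at key
    · right; rwa [show β = ε from h] at key

lemma trace_eq_of_isConj {g h : SL2 F} (hc : IsConj g h) :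
    Matrix.trace (g : Matrix (Fin 2) (Fin 2) F) = Matrix.trace (h : Matrix (Fin 2) (Fin 2) F) := by
  obtain ⟨c, hc⟩ := isConj_iff.1 hc
  have hcm : ((c * g * c⁻¹ : SL2 F) : Matrix (Fin 2) (Fin 2) F)
      = ((c : Matrix (Fin 2) (Fin 2) F) * g) * ((c⁻¹ : SL2 F) : Matrix (Fin 2) (Fin 2) F) := by
    simp [Matrix.SpecialLinearGroup.coe_mul]
  have h1 : ((c⁻¹ : SL2 F) : Matrix (Fin 2) (Fin 2) F) * (c : Matrix (Fin 2) (Fin 2) F) = 1 := by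
    rw [← Matrix.SpecialLinearGroup.coe_mul, inv_mul_cancel c, Matrix.SpecialLinearGroup.coe_one]
  rw [← hc, hcm, Matrix.trace_mul_comm, ← mul_assoc, h1, one_mul]

lemma isConj_neg {g h : SL2 F} (hc : IsConj g h) : IsConj (-g) (-h) := by
  obtain ⟨c, hc⟩ := isConj_iff.1 hc
  exact isConj_iff.2 ⟨c, by rw [mul_neg, neg_mul, hc]⟩

lemma Tm_ne_one {b : F} (hb : b ≠ 0) : Tm b ≠ 1 := by
  intro h
  apply hb
  have := congrArg (fun g : SL2 F => (g : Matrix (Fin 2) (Fin 2) F) 0 1) h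
  simpa [Tm, Matrix.SpecialLinearGroup.coe_one, Matrix.one_apply] using this

lemma not_conj_T {ε : F} (hε : ¬IsSquare ε) : ¬ IsConj (Tm (1:F)) (Tm ε) := by
  intro h
  obtain ⟨c, hc⟩ := isConj_iff.1 h
  rw [mul_inv_eq_iff_eq_mul] at hc
  have hm : (c : Matrix (Fin 2) (Fin 2) F) * ((Tm (1:F) : SL2 F) : Matrix (Fin 2) (Fin 2) F)
      = ((Tm ε : SL2 F) : Matrix (Fin 2) (Fin 2) F) * (c : Matrix (Fin 2) (Fin 2) F) := by
    have := congrArg (fun x : SL2 F => (x : Matrix (Fin 2) (Fin 2) F)) hc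
    simpa [Matrix.SpecialLinearGroup.coe_mul] using this
  set p := (c : Matrix (Fin 2) (Fin 2) F) 0 0
  set q := (c : Matrix (Fin 2) (Fin 2) F) 0 1
  set r := (c : Matrix (Fin 2) (Fin 2) F) 1 0
  set s := (c : Matrix (Fin 2) (Fin 2) F) 1 1
  have hdet : p * s - q * r = 1 := by
    have := c.2; rwa [Matrix.det_fin_two] at this
  have hε0 : ε ≠ 0 := fun h0 => hε (h0 ▸ ⟨0, by simp⟩)
  have e00 : p * 1 + q * 0 = (1 * p + ε * r) := by
    have := congrFun (congrFun hm 0) 0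
    simpa [Tm, Matrix.mul_apply, Fin.sum_univ_succ] using this
  have e01 : p * 1 + q * 1 = (1 * q + ε * s) := by
    have := congrFun (congrFun hm 0) 1
    simpa [Tm, Matrix.mul_apply, Fin.sum_univ_succ] using this
  have hr : r = 0 := by
    have h0 : ε * r = 0 := by linear_combination (-1 : F) * e00
    exact (mul_eq_zero.1 h0).resolve_left hε0
  have hps : p = ε * s := by linear_combination e01
  have hs0 : s ≠ 0 := by
    intro h0
    rw [hps, h0, hr] at hdet
    simp at hdet
  apply hε
  refine ⟨s⁻¹, ?_⟩
  have hεs : ε * s ^ 2 = 1 := by linear_combination hdet + (-s) * hps + q * hr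
  field_simp
  linear_combination hεs


def rep (ε : F) : ({t : F // t ^ 2 ≠ 4} ⊕ Bool × Fin 3) → SL2 F
  | Sum.inl t => Cm t.1
  | Sum.inr (s, i) =>
      (if s then -1 else 1) * (![1, Tm 1, Tm ε] i)

lemma trace_one_sl2 : Matrix.trace ((1 : SL2 F) : Matrix (Fin 2) (Fin 2) F) = 2 := by
  rw [Matrix.SpecialLinearGroup.coe_one, Matrix.trace_one]
  norm_num

lemma trace_Tm (b : F) : Matrix.trace ((Tm b : SL2 F) : Matrix (Fin 2) (Fin 2) F) = 2 := by
  show Matrix.trace !![1, b; 0, 1] = 2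
  rw [Matrix.trace_fin_two_of]; norm_num

lemma trace_rep_inr (ε : F) (s : Bool) (i : Fin 3) :
    Matrix.trace ((rep ε (Sum.inr (s, i)) : SL2 F) : Matrix (Fin 2) (Fin 2) F)
      = if s then -2 else 2 := by
  rcases s <;> fin_cases i <;>
    simp only [rep, if_true, if_false, Bool.false_eq_true, one_mul, neg_one_mul,
      Matrix.SpecialLinearGroup.coe_neg, Matrix.trace_neg, Fin.isValue,
      Matrix.cons_val_zero, Matrix.cons_val_one, Matrix.head_cons, Matrix.cons_val_two,
      Matrix.tail_cons] <;>
    norm_num [trace_one_sl2, trace_Tm]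

lemma trace_Cm (t : F) : Matrix.trace ((Cm t : SL2 F) : Matrix (Fin 2) (Fin 2) F) = t := by
  show Matrix.trace !![0, -1; 1, t] = t
  rw [Matrix.trace_fin_two_of]; ring

lemma rep_bijective (h2 : ringChar F ≠ 2) {ε : F} (hε : ¬IsSquare ε) :
    Function.Bijective (fun x => ConjClasses.mk (rep ε x)) := by
  have h40 : (4 : F) ≠ 0 := by
    intro h'
    apply Ring.two_ne_zero h2
    have h'' : (2 : F) * 2 = 0 := by linear_combination h'
    rcases mul_eq_zero.1 h'' with h3 | h3 <;> exact h3
  have hε0 : ε ≠ 0 := fun h0 => hε (h0 ▸ ⟨0, by simp⟩)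
  constructor
  · intro x y hxy
    rw [ConjClasses.mk_eq_mk_iff_isConj] at hxy
    have htr := trace_eq_of_isConj hxy
    match x, y with
    | Sum.inl t, Sum.inl t' =>
      rw [show rep ε (Sum.inl t) = Cm t.1 from rfl, show rep ε (Sum.inl t') = Cm t'.1 from rfl,
        trace_Cm, trace_Cm] at htr
      exact congrArg Sum.inl (Subtype.ext htr)
    | Sum.inl t, Sum.inr (s, i) =>
      exfalso
      rw [show rep ε (Sum.inl t) = Cm t.1 from rfl, trace_Cm, trace_rep_inr] at htr
      apply t.2
      rcases s <;> simp at htr <;> rw [htr] <;> ring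
    | Sum.inr (s, i), Sum.inl t =>
      exfalso
      rw [show rep ε (Sum.inl t) = Cm t.1 from rfl, trace_Cm, trace_rep_inr] at htr
      apply t.2
      rcases s <;> simp at htr <;> rw [← htr] <;> ring
    | Sum.inr (s, i), Sum.inr (s', j) =>
      rw [trace_rep_inr, trace_rep_inr] at htr
      have hss : s = s' := by
        rcases s <;> rcases s' <;> simp at htr ⊢ <;>
          · exfalso; apply h40
            first
            | linear_combination htr
            | linear_combination -htr
      subst hss
      have hij : IsConj ((![1, Tm 1, Tm ε] : Fin 3 → SL2 F) i)
          ((![1, Tm 1, Tm ε] : Fin 3 → SL2 F) j) := by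
        rcases s with _ | _
        · simpa [rep] using hxy
        · have h' := isConj_neg hxy
          have e1 : -(rep ε (Sum.inr (true, i))) = (![1, Tm 1, Tm ε] : Fin 3 → SL2 F) i := by
            simp [rep]
          have e2 : -(rep ε (Sum.inr (true, j))) = (![1, Tm 1, Tm ε] : Fin 3 → SL2 F) j := by
            simp [rep]
          rwa [e1, e2] at h'
      have : i = j := by
        fin_cases i <;> fin_cases j <;>
          simp only [Fin.zero_eta, Fin.mk_one, Fin.reduceFinMk, Matrix.cons_val_zero, Matrix.cons_val_one, Matrix.head_cons,
            Matrix.cons_val_two, Matrix.tail_cons, Fin.isValue] at hij <;>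
          first
          | rfl
          | exact absurd (isConj_one_right.1 hij) (Tm_ne_one one_ne_zero)
          | exact absurd (isConj_one_right.1 hij) (Tm_ne_one hε0)
          | exact absurd hij (not_conj_T hε)
          | exact absurd hij.symm (not_conj_T hε)
          | exact absurd (isConj_one_left.1 hij) (Tm_ne_one one_ne_zero)
          | exact absurd (isConj_one_left.1 hij) (Tm_ne_one hε0)
      rw [this]
  · intro cls
    obtain ⟨g, rfl⟩ := ConjClasses.mk_surjective cls
    by_cases h4 : (Matrix.trace (g : Matrix (Fin 2) (Fin 2) F)) ^ 2 = 4
    · have ht : Matrix.trace (g : Matrix (Fin 2) (Fin 2) F) = 2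
          ∨ Matrix.trace (g : Matrix (Fin 2) (Fin 2) F) = -2 := by
        set t := Matrix.trace (g : Matrix (Fin 2) (Fin 2) F)
        have : (t - 2) * (t + 2) = 0 := by linear_combination h4
        rcases mul_eq_zero.1 this with h | h
        · exact Or.inl (sub_eq_zero.1 h)
        · exact Or.inr (eq_neg_of_add_eq_zero_left h)
      rcases ht with ht | ht
      · by_cases hg1 : g = 1
        · exact ⟨Sum.inr (false, 0), by rw [hg1]; simp [rep]⟩
        · rcases conj_unipotent h2 hε g ht hg1 with h | h
          · exact ⟨Sum.inr (false, 1), by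
              rw [ConjClasses.mk_eq_mk_iff_isConj]; simpa [rep] using h.symm⟩
          · exact ⟨Sum.inr (false, 2), by
              rw [ConjClasses.mk_eq_mk_iff_isConj]; simpa [rep] using h.symm⟩
      · have htn : Matrix.trace ((-g : SL2 F) : Matrix (Fin 2) (Fin 2) F) = 2 := by
          rw [Matrix.SpecialLinearGroup.coe_neg, Matrix.trace_neg, ht]; ring
        by_cases hg1 : -g = 1
        · refine ⟨Sum.inr (true, 0), ?_⟩
          have : g = -1 := by rw [← neg_neg g, hg1]
          rw [this]; simp [rep]
        · rcases conj_unipotent h2 hε (-g) htn hg1 with h | h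
          · refine ⟨Sum.inr (true, 1), ?_⟩
            rw [ConjClasses.mk_eq_mk_iff_isConj]
            have := isConj_neg h
            rw [neg_neg] at this
            simpa [rep, neg_one_mul] using this.symm
          · refine ⟨Sum.inr (true, 2), ?_⟩
            rw [ConjClasses.mk_eq_mk_iff_isConj]
            have := isConj_neg h
            rw [neg_neg] at this
            simpa [rep, neg_one_mul] using this.symm
    · refine ⟨Sum.inl ⟨_, h4⟩, ?_⟩
      rw [ConjClasses.mk_eq_mk_iff_isConj]
      exact (conj_companion h2 g h4).symm

end SL2CC

open SL2CC in
/-- Let `q` be an odd prime power and `G = SL₂(𝔽_q)`.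
Then `G` has exactly `q + 4` conjugacy classes. -/
theorem sl2_card_conjClasses (q : ℕ) (hq : Odd q) (F : Type*) [Field F] [Fintype F]
    (hcard : Fintype.card F = q) :
    Nat.card (ConjClasses (Matrix.SpecialLinearGroup (Fin 2) F)) = q + 4 := by
  classical
  have h2 : ringChar F ≠ 2 := by
    intro h
    have := FiniteField.even_card_of_char_two h
    rw [hcard] at this
    obtain ⟨k, hk⟩ := hq
    omega
  obtain ⟨ε, hε⟩ := FiniteField.exists_nonsquare (F := F) h2
  have hbij := rep_bijective h2 hε
  have hcards := Nat.card_eq_of_bijective _ hbij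
  rw [← hcards]
  have h40 : (4 : F) ≠ 0 := by
    intro h'
    apply Ring.two_ne_zero h2
    have h'' : (2 : F) * 2 = 0 := by linear_combination h'
    rcases mul_eq_zero.1 h'' with h3 | h3 <;> exact h3
  have h22 : (2 : F) ≠ -2 := by
    intro h
    apply h40
    linear_combination h
  have hsq : Fintype.card {t : F // t ^ 2 = 4} = 2 := by
    rw [Fintype.card_of_subtype ({2, -2} : Finset F) (fun x => by
      constructor
      · intro hx
        rcases Finset.mem_insert.1 hx with rfl | hx
        · ring
        · rw [Finset.mem_singleton.1 hx]; ring
      · intro hx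
        have : (x - 2) * (x + 2) = 0 := by linear_combination hx
        rcases mul_eq_zero.1 this with h | h
        · exact Finset.mem_insert.2 (Or.inl (sub_eq_zero.1 h))
        · exact Finset.mem_insert.2 (Or.inr (Finset.mem_singleton.2 (eq_neg_of_add_eq_zero_left h))))]
    exact Finset.card_pair h22
  have hq2 : 2 ≤ q := by
    have := Fintype.one_lt_card (α := F)
    omega
  have hc1 : Fintype.card {t : F // t ^ 2 ≠ 4} = q - 2 := by
    rw [Fintype.card_subtype_compl, hsq, hcard]
  rw [Nat.card_eq_fintype_card, Fintype.card_sum, hc1, Fintype.card_prod, Fintype.card_bool,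
    Fintype.card_fin]
  omega
end

section
/- Let G be a finite group and g ∈ G. Then the number of pairs (x,y) ∈ G × G with xyx⁻¹y⁻¹ = g equals #G · Σ_{ρ ∈ Irr(G)} χ_ρ(g)/χ_ρ(1), where the sum runs over the irreducible complex characters of G. (Frobenius's formula.) -/
open CategoryTheory

section FrobeniusAux
open Module
open scoped Classical

set_option linter.unusedSectionVars false
set_option maxHeartbeats 1000000

variable {G : Type} [Group G] [Fintype G]

/-! ### Generalities -/

theorem FrobeniusAux.rho_mul (V : FDRep ℂ G) (a b : G) : V.ρ a * V.ρ b = V.ρ (a * b) :=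
  (map_mul V.ρ a b).symm

theorem FrobeniusAux.char_def (V : FDRep ℂ G) (h : G) :
    LinearMap.trace ℂ V (V.ρ h) = V.character h := rfl

theorem FrobeniusAux.hom_comm_apply {V W : FDRep ℂ G} (f : V ⟶ W) (g : G) (v : V) :
    f.hom (V.ρ g v) = W.ρ g (f.hom v) := by
  have h : f.hom.hom.hom ∘ₗ V.ρ g = W.ρ g ∘ₗ f.hom.hom.hom := by
    exact congrArg (fun φ => φ.hom.hom) (f.comm g)
  exact LinearMap.congr_fun h v

namespace FrobeniusAux

/-- An equivariant linear endomorphism as a morphism in `FDRep`. -/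
def homOfComm (V : FDRep ℂ G) (T : V →ₗ[ℂ] V) (h : ∀ g : G, T ∘ₗ V.ρ g = V.ρ g ∘ₗ T) : V ⟶ V :=
  ⟨FGModuleCat.ofHom T, fun g => by
    ext v
    change (T ∘ₗ V.ρ g) v = (V.ρ g ∘ₗ T) v
    rw [h g]⟩

theorem finrank_ne_zero' (V : FDRep ℂ G) [Simple V] : ((finrank ℂ V : ℂ)) ≠ 0 := by
  have h : finrank ℂ V ≠ 0 := by
    intro h0
    haveI hs := Module.finrank_zero_iff (R := ℂ) (M := V) |>.mp h0
    apply CategoryTheory.id_nonzero V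
    have hv : ∀ v : V, Action.Hom.hom (𝟙 V) v = Action.Hom.hom (0 : V ⟶ V) v :=
      fun v => @Subsingleton.elim _ hs _ _
    exact Action.hom_ext _ _ (by ext v; exact hv v)
  exact_mod_cast h

/-- Schur's lemma: an equivariant endomorphism of a simple `FDRep` is scalar. -/
theorem schur_scalar (V : FDRep ℂ G) [Simple V] (T : V →ₗ[ℂ] V)
    (hT : ∀ g : G, T ∘ₗ V.ρ g = V.ρ g ∘ₗ T) :
    T = (LinearMap.trace ℂ V T / (finrank ℂ V : ℂ)) • LinearMap.id := by
  have hrank : finrank ℂ (V ⟶ V) = 1 := by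
    rw [FDRep.finrank_hom_simple_simple V V, if_pos ⟨Iso.refl V⟩]
  obtain ⟨c, hc⟩ := (finrank_eq_one_iff_of_nonzero' (𝟙 V) (CategoryTheory.id_nonzero V)).mp hrank
    (homOfComm V T hT)
  have hhom : T = c • LinearMap.id := (congrArg (fun φ => φ.hom.hom.hom) hc).symm
  have hcval : c = LinearMap.trace ℂ V T / (finrank ℂ V : ℂ) := by
    rw [hhom, map_smul, LinearMap.trace_id, smul_eq_mul]
    field_simp [finrank_ne_zero' V]
  rw [← hcval]
  exact hhom

theorem schur_scalar' (V : FDRep ℂ G) [Simple V] (T : V →ₗ[ℂ] V)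
    (hT : ∀ g : G, T * V.ρ g = V.ρ g * T) :
    T = (LinearMap.trace ℂ V T / (finrank ℂ V : ℂ)) • 1 :=
  schur_scalar V T hT

/-- First orthogonality of characters, rescaled. -/
theorem char_orthog (V W : FDRep ℂ G) [Simple V] [Simple W] :
    ∑ g : G, V.character g * W.character g⁻¹ =
      if Nonempty (V ≅ W) then (Fintype.card G : ℂ) else 0 := by
  haveI : Invertible ((Fintype.card G : ℂ)) :=
    invertibleOfNonzero (by exact_mod_cast Fintype.card_ne_zero)
  have h := FDRep.char_orthonormal (k := ℂ) (G := G) V W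
  rw [inv_mul_eq_iff_eq_mul₀ (by exact_mod_cast Nat.card_pos.ne')] at h
  have hc : (Nat.card G : ℂ) = (Fintype.card G : ℂ) := by rw [Nat.card_eq_fintype_card]
  by_cases hio : Nonempty (V ≅ W)
  · rw [if_pos hio] at h ⊢
    exact h.trans (by norm_num [hc])
  · rw [if_neg hio] at h ⊢
    exact h.trans (by norm_num)

/-! ### The key operator identities -/

theorem key1 (V : FDRep ℂ G) [Simple V] (y : G) :
    (∑ x : G, V.ρ (x * y * x⁻¹)) =
      ((Fintype.card G : ℂ) * V.character y / (finrank ℂ V : ℂ)) • 1 := by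
  have hT : ∀ g : G, (∑ x : G, V.ρ (x * y * x⁻¹)) * V.ρ g
      = V.ρ g * (∑ x : G, V.ρ (x * y * x⁻¹)) := by
    intro g
    rw [Finset.sum_mul, Finset.mul_sum]
    simp only [rho_mul]
    apply Fintype.sum_bijective (fun x => g⁻¹ * x) (Group.mulLeft_bijective g⁻¹)
    intro x
    congr 1
    group
  have htr : LinearMap.trace ℂ V (∑ x : G, V.ρ (x * y * x⁻¹))
      = (Fintype.card G : ℂ) * V.character y := by
    rw [map_sum]
    simp only [char_def, FDRep.char_conj]
    simp [Finset.sum_const, mul_comm]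
  rw [schur_scalar' V _ hT, htr]

theorem key2 (V : FDRep ℂ G) [Simple V] :
    (∑ y : G, V.character y • V.ρ y⁻¹) =
      ((Fintype.card G : ℂ) / (finrank ℂ V : ℂ)) • 1 := by
  have hT : ∀ g : G, (∑ y : G, V.character y • V.ρ y⁻¹) * V.ρ g
      = V.ρ g * (∑ y : G, V.character y • V.ρ y⁻¹) := by
    intro g
    rw [Finset.sum_mul, Finset.mul_sum]
    simp only [smul_mul_assoc, mul_smul_comm, rho_mul]
    apply Fintype.sum_bijective (fun y => g⁻¹ * y * g)
      (by
        constructor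
        · intro a b hab; simpa using hab
        · intro b; exact ⟨g * b * g⁻¹, by group⟩)
    intro y
    have hc : V.character (g⁻¹ * y * g) = V.character y := by
      simpa using FDRep.char_conj V y g⁻¹
    rw [hc]
    congr 1
    group
  have htr : LinearMap.trace ℂ V (∑ y : G, V.character y • V.ρ y⁻¹)
      = (Fintype.card G : ℂ) := by
    rw [map_sum]
    simp only [map_smul, char_def, smul_eq_mul]
    rw [char_orthog V V, if_pos ⟨Iso.refl V⟩]
  rw [schur_scalar' V _ hT, htr]

theorem key3 (V : FDRep ℂ G) [Simple V] :
    (∑ y : G, ∑ x : G, V.ρ (x * y * x⁻¹ * y⁻¹)) =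
      (((Fintype.card G : ℂ) / (finrank ℂ V : ℂ)) * ((Fintype.card G : ℂ) / (finrank ℂ V : ℂ)))
        • 1 := by
  have inner : ∀ y : G, (∑ x : G, V.ρ (x * y * x⁻¹ * y⁻¹)) =
      ((Fintype.card G : ℂ) / (finrank ℂ V : ℂ)) • (V.character y • V.ρ y⁻¹) := by
    intro y
    have h1 : (∑ x : G, V.ρ (x * y * x⁻¹ * y⁻¹)) = (∑ x : G, V.ρ (x * y * x⁻¹)) * V.ρ y⁻¹ := by
      rw [Finset.sum_mul]
      simp only [rho_mul]
    rw [h1, key1, smul_mul_assoc, one_mul, smul_smul]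
    congr 1
    ring
  calc (∑ y : G, ∑ x : G, V.ρ (x * y * x⁻¹ * y⁻¹))
      = ((Fintype.card G : ℂ) / (finrank ℂ V : ℂ)) • (∑ y : G, V.character y • V.ρ y⁻¹) := by
        rw [Finset.smul_sum]; exact Finset.sum_congr rfl (fun y _ => inner y)
    _ = _ := by rw [key2, smul_smul]

theorem key4 (V : FDRep ℂ G) [Simple V] (g : G) :
    (∑ y : G, ∑ x : G, V.character (g * (x * y * x⁻¹ * y⁻¹))) =
      ((Fintype.card G : ℂ) / (finrank ℂ V : ℂ)) * ((Fintype.card G : ℂ) / (finrank ℂ V : ℂ))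
        * V.character g := by
  have h1 : (∑ y : G, ∑ x : G, V.character (g * (x * y * x⁻¹ * y⁻¹)))
      = LinearMap.trace ℂ V (V.ρ g * (∑ y : G, ∑ x : G, V.ρ (x * y * x⁻¹ * y⁻¹))) := by
    rw [Finset.mul_sum]
    simp only [Finset.mul_sum, rho_mul, map_sum, char_def]
  rw [h1, key3, mul_smul_comm, mul_one, map_smul, char_def, smul_eq_mul]

/-! ### The bridge: simple modules over the monoid algebra give simple `FDRep`s -/

section Bridge
variable (M : Type) [AddCommGroup M] [Module ℂ M] [Module (MonoidAlgebra ℂ G) M]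
  [IsScalarTower ℂ (MonoidAlgebra ℂ G) M] [FiniteDimensional ℂ M]

/-- The `FDRep` attached to a f.d. module over the monoid algebra. -/
noncomputable def fdRepOfModule : FDRep ℂ G :=
  FDRep.of (Representation.ofModule' (k := ℂ) (G := G) M)

theorem fdRepOfModule_ρ (g : G) (m : M) :
    (fdRepOfModule M).ρ g m = (MonoidAlgebra.single g (1:ℂ)) • m := by
  show Representation.ofModule' (k := ℂ) (G := G) M g m = _
  simp [Representation.ofModule', MonoidAlgebra.lift_symm_apply]

/-- A finite-dimensional simple module over the monoid algebra gives a `Simple` object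
of `FDRep`. -/
theorem simple_fdRepOfModule [IsSimpleModule (MonoidAlgebra ℂ G) M] :
    Simple (fdRepOfModule (G := G) M) := by
  constructor
  intro Y f hm
  constructor
  · intro hiso hf0
    haveI : Nontrivial M := IsSimpleModule.nontrivial (MonoidAlgebra ℂ G) M
    obtain ⟨m, m', hmm⟩ := exists_pair_ne M
    haveI : IsIso (0 : Y ⟶ fdRepOfModule (G := G) M) := by rw [← hf0]; infer_instance
    have h1 : (𝟙 (fdRepOfModule (G := G) M) : _ ⟶ _) = 0 := by
      rw [← IsIso.inv_hom_id (0 : Y ⟶ fdRepOfModule (G := G) M), Limits.comp_zero]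
    have hzero : ∀ a : M, a = 0 := by
      intro a
      have ha : a = Action.Hom.hom (𝟙 (fdRepOfModule (G := G) M)) a := rfl
      rw [h1] at ha
      exact ha.trans rfl
    exact hmm ((hzero m).trans (hzero m').symm)
  · intro hf0
    set F : Y →ₗ[ℂ] M := f.hom.hom.hom with hF
    have hinj : Function.Injective F := by
      rw [← LinearMap.ker_eq_bot]
      by_contra hk
      set K := LinearMap.ker F with hK
      have hKinv : ∀ (g : G) (v : Y), v ∈ K → Y.ρ g v ∈ K := by
        intro g v hv
        have hv' : F v = 0 := hv
        show F (Y.ρ g v) = 0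
        refine (hom_comm_apply f g v).trans ?_
        show (fdRepOfModule (G := G) M).ρ g (F v) = 0
        exact (congrArg ((fdRepOfModule (G := G) M).ρ g) hv').trans (map_zero _)
      set ρK : Representation ℂ G ↥K :=
        { toFun := fun g => (Y.ρ g).restrict (fun v hv => hKinv g v hv)
          map_one' := by ext v; simp
          map_mul' := fun a b => by ext v; simp } with hρK
      set W : FDRep ℂ G := FDRep.of ρK with hW
      set ι : W ⟶ Y := ⟨FGModuleCat.ofHom K.subtype, fun g => rfl⟩ with hι
      have hcomp : ι ≫ f = (0 : W ⟶ Y) ≫ f := by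
        rw [Limits.zero_comp]
        apply Action.hom_ext
        ext v
        change F (K.subtype v) = 0
        exact v.2
      have hι0 : ι = 0 := (cancel_mono f).mp hcomp
      obtain ⟨v, hv⟩ := Submodule.exists_mem_ne_zero_of_ne_bot hk
      apply hv.2
      have hv0 : K.subtype ⟨v, hv.1⟩ = 0 := by
        rw [show K.subtype = ι.hom.hom.hom from rfl, hι0]
        rfl
      exact hv0
    have hr : ∀ (a : MonoidAlgebra ℂ G), ∀ x ∈ LinearMap.range F,
        a • x ∈ LinearMap.range F := by
      intro a
      induction a using MonoidAlgebra.induction_on with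
      | of g =>
          rintro x ⟨y, rfl⟩
          refine ⟨Y.ρ g y, ?_⟩
          refine (hom_comm_apply f g y).trans ?_
          show (fdRepOfModule (G := G) M).ρ g (F y) = _
          rw [fdRepOfModule_ρ]
          rfl
      | add a b ha hb =>
          intro x hx
          rw [add_smul]
          exact Submodule.add_mem _ (ha x hx) (hb x hx)
      | smul c a ha =>
          intro x hx
          rw [smul_assoc]
          exact Submodule.smul_mem _ c (ha x hx)
    set R : Submodule (MonoidAlgebra ℂ G) M :=
      { carrier := Set.range F
        add_mem' := by rintro x y ⟨a, rfl⟩ ⟨b, rfl⟩; exact ⟨a + b, map_add F a b⟩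
        zero_mem' := ⟨0, map_zero F⟩
        smul_mem' := fun a x hx => hr a x hx } with hR
    have hRtop : R = ⊤ := by
      rcases eq_bot_or_eq_top R with h | h
      · exfalso
        apply hf0
        apply Action.hom_ext
        ext v
        have hmem : F v ∈ R := ⟨v, rfl⟩
        rw [h, Submodule.mem_bot] at hmem
        exact hmem.trans (by simp; rfl)
      · exact h
    have hsurj : Function.Surjective F := by
      intro m
      have : m ∈ R := hRtop ▸ Submodule.mem_top
      exact this
    set e := LinearEquiv.ofBijective F ⟨hinj, hsurj⟩ with he
    refine ⟨⟨⟨FGModuleCat.ofHom e.symm.toLinearMap, ?_⟩, ?_, ?_⟩⟩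
    · intro g
      ext m
      change e.symm ((fdRepOfModule (G := G) M).ρ g m) = Y.ρ g (e.symm m)
      apply hinj
      have h3 : F (e.symm m) = m := e.apply_symm_apply m
      exact (e.apply_symm_apply _).trans ((congrArg ((fdRepOfModule (G := G) M).ρ g) h3.symm).trans
        (hom_comm_apply f g (e.symm m)).symm)
    · apply Action.hom_ext
      ext v
      exact e.symm_apply_apply v
    · apply Action.hom_ext
      ext v
      exact e.apply_symm_apply v

end Bridge

/-! ### Column orthogonality at the identity -/

/-- The difference between `#G·δ₁` and the putative character expansion. -/
noncomputable def defect {ι : Type} [Fintype ι] (ρ : ι → FDRep ℂ G) (h : G) : ℂ :=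
  (Fintype.card G : ℂ) * (if h = 1 then 1 else 0) - ∑ i, (ρ i).character 1 * (ρ i).character h⁻¹

theorem defect_conj {ι : Type} [Fintype ι] (ρ : ι → FDRep ℂ G) (s h : G) :
    defect ρ (s * h * s⁻¹) = defect ρ h := by
  unfold defect
  have h1 : (s * h * s⁻¹ = 1) ↔ (h = 1) := by
    constructor
    · intro hh
      have := congrArg (fun t => s⁻¹ * t * s) hh
      simpa [mul_assoc] using this
    · intro hh; rw [hh]; group
  rw [if_congr h1 rfl rfl]
  congr 1
  apply Finset.sum_congr rfl
  intro i _
  congr 1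
  have : (s * h * s⁻¹)⁻¹ = s * h⁻¹ * s⁻¹ := by group
  rw [this, FDRep.char_conj]

theorem defect_orth {ι : Type} [Fintype ι] (ρ : ι → FDRep ℂ G) (hsimple : ∀ i, Simple (ρ i))
    (hpairwise : ∀ i j, i ≠ j → ¬ Nonempty (ρ i ≅ ρ j)) (i : ι) :
    ∑ h : G, defect ρ h * (ρ i).character h = 0 := by
  haveI := hsimple
  unfold defect
  rw [Finset.sum_congr rfl (fun (h : G) _ =>
    sub_mul ((Fintype.card G : ℂ) * (if h = 1 then 1 else 0))
      (∑ j, (ρ j).character 1 * (ρ j).character h⁻¹) ((ρ i).character h)),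
    Finset.sum_sub_distrib]
  have h1 : ∑ h : G, (Fintype.card G : ℂ) * (if h = 1 then 1 else 0) * (ρ i).character h
      = (Fintype.card G : ℂ) * (ρ i).character 1 := by
    rw [Finset.sum_eq_single 1]
    · simp
    · intro b _ hb; simp [hb]
    · simp
  have h2 : ∑ h : G, (∑ j, (ρ j).character 1 * (ρ j).character h⁻¹) * (ρ i).character h
      = (Fintype.card G : ℂ) * (ρ i).character 1 := by
    have swap : ∑ h : G, (∑ j, (ρ j).character 1 * (ρ j).character h⁻¹) * (ρ i).character h
        = ∑ j, (ρ j).character 1 * ∑ h : G, (ρ i).character h * (ρ j).character h⁻¹ := by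
      calc ∑ h : G, (∑ j, (ρ j).character 1 * (ρ j).character h⁻¹) * (ρ i).character h
          = ∑ h : G, ∑ j, (ρ j).character 1 * (ρ j).character h⁻¹ * (ρ i).character h := by
            apply Finset.sum_congr rfl; intro h _; rw [Finset.sum_mul]
        _ = ∑ j, ∑ h : G, (ρ j).character 1 * (ρ j).character h⁻¹ * (ρ i).character h :=
            Finset.sum_comm
        _ = ∑ j, (ρ j).character 1 * ∑ h : G, (ρ i).character h * (ρ j).character h⁻¹ := by
            apply Finset.sum_congr rfl; intro j _
            rw [Finset.mul_sum]
            apply Finset.sum_congr rfl; intro h _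
            ring
    rw [swap]
    rw [Finset.sum_eq_single i]
    · rw [char_orthog (ρ i) (ρ i), if_pos ⟨Iso.refl _⟩]
      ring
    · intro j _ hj
      rw [char_orthog (ρ i) (ρ j), if_neg (fun hne => hpairwise j i hj ⟨hne.some.symm⟩)]
      ring
    · intro hi; exact absurd (Finset.mem_univ i) hi
  rw [h1, h2, sub_self]

theorem defect_eq_zero {ι : Type} [Fintype ι] (ρ : ι → FDRep ℂ G)
    (hsimple : ∀ i, Simple (ρ i))
    (hpairwise : ∀ i j, i ≠ j → ¬ Nonempty (ρ i ≅ ρ j))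
    (hcomplete : ∀ V : FDRep ℂ G, Simple V → ∃ i, Nonempty (V ≅ ρ i)) (h₀ : G) :
    defect ρ h₀ = 0 := by
  haveI : NeZero ((Fintype.card G : ℂ)) := ⟨by exact_mod_cast Fintype.card_ne_zero⟩
  set A := MonoidAlgebra ℂ G with hA
  set z : A := ∑ h : G, MonoidAlgebra.single h (defect ρ h) with hz
  have hcentral : ∀ a : A, a * z = z * a := by
    intro a
    induction a using MonoidAlgebra.induction_on with
    | of g =>
        rw [hz, Finset.mul_sum, Finset.sum_mul]
        apply Fintype.sum_bijective (fun h => g * h * g⁻¹)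
          (by
            constructor
            · intro a b hab; simpa using hab
            · intro b; exact ⟨g⁻¹ * b * g, by group⟩)
        intro h
        rw [MonoidAlgebra.of_apply, MonoidAlgebra.single_mul_single,
          MonoidAlgebra.single_mul_single, defect_conj]
        congr 1
        · group
        · rw [one_mul, mul_one]
    | add a b ha hb => rw [add_mul, mul_add, ha, hb]
    | smul c a ha => rw [smul_mul_assoc, mul_smul_comm, ha]
  have hann : ∀ (S : Submodule A A), IsSimpleModule A ↥S → ∀ s : A, s ∈ S → z * s = 0 := by
    intro S hSsimple s hs
    haveI := hSsimple
    haveI hfd : FiniteDimensional ℂ ↥S := by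
      have hfdA : FiniteDimensional ℂ A := inferInstance
      exact FiniteDimensional.of_injective ((S.subtype).restrictScalars ℂ) Subtype.val_injective
    set VS := fdRepOfModule (G := G) ↥S with hVS
    haveI : Simple VS := simple_fdRepOfModule ↥S
    obtain ⟨i, ⟨iso⟩⟩ := hcomplete VS ‹Simple VS›
    have hchar : VS.character = (ρ i).character := FDRep.char_iso iso
    set T : VS →ₗ[ℂ] VS := ∑ h : G, defect ρ h • (VS.ρ h) with hT
    have hTcomm : ∀ g : G, T * VS.ρ g = VS.ρ g * T := by
      intro g
      rw [hT, Finset.sum_mul, Finset.mul_sum]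
      simp only [smul_mul_assoc, mul_smul_comm, rho_mul]
      apply Fintype.sum_bijective (fun h => g⁻¹ * h * g)
        (by
          constructor
          · intro a b hab; simpa using hab
          · intro b; exact ⟨g * b * g⁻¹, by group⟩)
      intro h
      have hd : defect ρ (g⁻¹ * h * g) = defect ρ h := by
        have := defect_conj ρ g⁻¹ h
        simpa using this
      rw [hd]
      congr 1
      group
    have hTr : LinearMap.trace ℂ VS T = 0 := by
      rw [hT, map_sum]
      simp only [map_smul, smul_eq_mul]
      have : ∀ h : G, LinearMap.trace ℂ VS (VS.ρ h) = (ρ i).character h := by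
        intro h
        rw [← hchar]
        rfl
      rw [Finset.sum_congr rfl (fun h _ => by rw [this h])]
      exact defect_orth ρ hsimple hpairwise i
    have hT0 : T = 0 := by
      rw [schur_scalar' VS T hTcomm, hTr, zero_div, zero_smul]
    have hzs : z • (⟨s, hs⟩ : ↥S)
        = ∑ h : G, MonoidAlgebra.single h (defect ρ h) • (⟨s, hs⟩ : ↥S) := by
      rw [hz]
      exact Finset.sum_smul
    have hTs : T ⟨s, hs⟩ = z • (⟨s, hs⟩ : ↥S) := by
      rw [hT]
      refine (LinearMap.sum_apply _ _ _).trans ?_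
      rw [hzs]
      apply Finset.sum_congr rfl
      intro h _
      refine (LinearMap.smul_apply _ _ _).trans ?_
      have e1 : (VS.ρ h) ⟨s, hs⟩ = (MonoidAlgebra.single h (1:ℂ)) • (⟨s, hs⟩ : ↥S) :=
        fdRepOfModule_ρ ↥S h _
      rw [e1]
      show defect ρ h • ((MonoidAlgebra.single h (1:ℂ)) • (⟨s, hs⟩ : ↥S))
        = MonoidAlgebra.single h (defect ρ h) • (⟨s, hs⟩ : ↥S)
      rw [← smul_assoc, MonoidAlgebra.smul_single', mul_one]
    have hz0 : z • (⟨s, hs⟩ : ↥S) = 0 := by rw [← hTs, hT0]; rfl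
    have := congrArg (Subtype.val) hz0
    simpa using this
  have hz0 : z = 0 := by
    set L : A →ₗ[A] A :=
      { toFun := fun a => z * a
        map_add' := fun a b => mul_add z a b
        map_smul' := fun c a => by
          simp only [smul_eq_mul, RingHom.id_apply]
          rw [← mul_assoc, ← hcentral c, mul_assoc] } with hL
    have htop : (⊤ : Submodule A A) ≤ LinearMap.ker L := by
      rw [← IsSemisimpleModule.sSup_simples_eq_top A A]
      apply sSup_le
      intro S hS
      intro s hs
      exact hann S hS s hs
    have h1 : L 1 = 0 := htop Submodule.mem_top
    have h2 : z * 1 = 0 := h1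
    rwa [mul_one] at h2
  have := congrArg (fun (f : MonoidAlgebra ℂ G) => f.coeff h₀) hz0
  simp only [hz] at this
  rw [MonoidAlgebra.coeff_sum, Finsupp.finset_sum_apply] at this
  simp only [MonoidAlgebra.coeff_single, MonoidAlgebra.coeff_zero] at this
  rw [Finset.sum_eq_single h₀ (fun b _ hb => Finsupp.single_eq_of_ne' hb)
    (fun hh => absurd (Finset.mem_univ h₀) hh)] at this
  simpa using this

/-- Column orthogonality: `∑_i χ_i(1)·χ_i(h) = #G·δ_{h,1}`. -/
theorem key5 {ι : Type} [Fintype ι] (ρ : ι → FDRep ℂ G)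
    (hsimple : ∀ i, Simple (ρ i))
    (hpairwise : ∀ i j, i ≠ j → ¬ Nonempty (ρ i ≅ ρ j))
    (hcomplete : ∀ V : FDRep ℂ G, Simple V → ∃ i, Nonempty (V ≅ ρ i)) (h : G) :
    ∑ i, (ρ i).character 1 * (ρ i).character h
      = (Fintype.card G : ℂ) * (if h = 1 then 1 else 0) := by
  have hd := defect_eq_zero ρ hsimple hpairwise hcomplete h⁻¹
  unfold defect at hd
  rw [sub_eq_zero] at hd
  simp only [inv_inv, inv_eq_one] at hd
  exact hd.symm

end FrobeniusAux

end FrobeniusAux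

open FrobeniusAux Module in
/-- Frobenius's formula: for a finite group `G` and `g ∈ G`, the number of pairs `(x,y)`
with `xyx⁻¹y⁻¹ = g` equals `#G · Σ_{ρ ∈ Irr(G)} χ_ρ(g)/χ_ρ(1)`, the sum running over
(a complete set of representatives of) the irreducible complex characters of `G`. -/
theorem frobenius_commutator_formula (G : Type) [Group G] [Fintype G] (g : G)
    (ι : Type) [Fintype ι] (ρ : ι → FDRep ℂ G)
    (hsimple : ∀ i, Simple (ρ i))
    (hpairwise : ∀ i j, i ≠ j → ¬ Nonempty (ρ i ≅ ρ j))
    (hcomplete : ∀ V : FDRep ℂ G, Simple V → ∃ i, Nonempty (V ≅ ρ i)) :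
    (Nat.card {p : G × G | p.1 * p.2 * p.1⁻¹ * p.2⁻¹ = g} : ℂ) =
      (Fintype.card G : ℂ) * ∑ i, (ρ i).character g / (ρ i).character 1 := by
  classical
  have hn : ((Fintype.card G : ℂ)) ≠ 0 := by exact_mod_cast Fintype.card_ne_zero
  have step0 : (Nat.card {p : G × G | p.1 * p.2 * p.1⁻¹ * p.2⁻¹ = g} : ℂ)
      = ∑ p : G × G, (if p.1 * p.2 * p.1⁻¹ * p.2⁻¹ = g then (1:ℂ) else 0) := by
    rw [Nat.card_eq_fintype_card, Fintype.card_subtype, Finset.card_filter]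
    push_cast
    apply Finset.sum_congr rfl
    intro p _
    simp [Set.mem_setOf_eq]
  have hind : ∀ x y : G, (if x * y * x⁻¹ * y⁻¹ = g then (1:ℂ) else 0)
      = (1 / (Fintype.card G : ℂ))
        * ∑ i, (ρ i).character 1 * (ρ i).character (g * (y * x * y⁻¹ * x⁻¹)) := by
    intro x y
    rw [key5 ρ hsimple hpairwise hcomplete (g * (y * x * y⁻¹ * x⁻¹))]
    have hiff : (g * (y * x * y⁻¹ * x⁻¹) = 1) ↔ (x * y * x⁻¹ * y⁻¹ = g) := by
      rw [mul_eq_one_iff_eq_inv, show (y * x * y⁻¹ * x⁻¹)⁻¹ = x * y * x⁻¹ * y⁻¹ by group,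
        eq_comm]
    rw [if_congr hiff rfl rfl]
    split_ifs
    · field_simp
    · ring
  rw [step0]
  calc ∑ p : G × G, (if p.1 * p.2 * p.1⁻¹ * p.2⁻¹ = g then (1:ℂ) else 0)
      = ∑ p : G × G, (1 / (Fintype.card G : ℂ))
          * ∑ i, (ρ i).character 1 * (ρ i).character (g * (p.2 * p.1 * p.2⁻¹ * p.1⁻¹)) := by
        apply Finset.sum_congr rfl
        intro p _
        exact hind p.1 p.2
    _ = (1 / (Fintype.card G : ℂ)) * ∑ i, ∑ p : G × G,
          (ρ i).character 1 * (ρ i).character (g * (p.2 * p.1 * p.2⁻¹ * p.1⁻¹)) := by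
        rw [← Finset.mul_sum]
        congr 1
        exact Finset.sum_comm
    _ = (1 / (Fintype.card G : ℂ)) * ∑ i, (ρ i).character 1
          * ∑ x : G, ∑ y : G, (ρ i).character (g * (y * x * y⁻¹ * x⁻¹)) := by
        congr 1
        apply Finset.sum_congr rfl
        intro i _
        rw [← Finset.mul_sum, Fintype.sum_prod_type, Finset.mul_sum]
    _ = (1 / (Fintype.card G : ℂ)) * ∑ i, (ρ i).character 1
          * (((Fintype.card G : ℂ) / (finrank ℂ (ρ i) : ℂ))
            * ((Fintype.card G : ℂ) / (finrank ℂ (ρ i) : ℂ)) * (ρ i).character g) := by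
        congr 1
        apply Finset.sum_congr rfl
        intro i _
        haveI := hsimple i
        rw [key4 (ρ i) g]
    _ = (Fintype.card G : ℂ) * ∑ i, (ρ i).character g / (ρ i).character 1 := by
        rw [Finset.mul_sum, Finset.mul_sum]
        apply Finset.sum_congr rfl
        intro i _
        haveI := hsimple i
        have hc1 : (ρ i).character 1 = ((finrank ℂ (ρ i) : ℂ)) := by
          exact_mod_cast FDRep.char_one (ρ i)
        have hd0 : ((finrank ℂ (ρ i) : ℂ)) ≠ 0 := finrank_ne_zero' (ρ i)
        rw [hc1]
        field_simp
end

section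
/- Let q be an odd prime power, H the Heisenberg group on W = F_q^{2n}, and ψ a nontrivial additive character of the center Z ≅ F_q. Then up to equivalence there is a unique irreducible complex representation π of H whose central character is ψ, and its dimension is q^n. (Stone–von Neumann theorem over F_q.) -/
/-- The underlying set of the Heisenberg group `H = W × 𝔽_q`, `W = 𝔽_q^m`. -/
structure Heisenberg (F : Type) (m : ℕ) where
  w : Fin m → F
  z : F

/-- The Heisenberg group structure: `(w,z)·(w',z') = (w+w', z+z'+½⟨w,w'⟩)`. -/
def heisGroup {F : Type} [Field F] {m : ℕ} (B : LinearMap.BilinForm F (Fin m → F))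
    (halt : B.IsAlt) : Group (Heisenberg F m) :=
  { mul := fun p p' => ⟨p.w + p'.w, p.z + p'.z + (2 : F)⁻¹ * B p.w p'.w⟩
    one := ⟨0, 0⟩
    inv := fun p => ⟨-p.w, -p.z⟩
    div := fun p p' => ⟨p.w + -p'.w, p.z + -p'.z + (2 : F)⁻¹ * B p.w (-p'.w)⟩
    div_eq_mul_inv := fun _ _ => rfl
    mul_assoc := fun a b c => by
      show (⟨(a.w + b.w) + c.w, (a.z + b.z + (2 : F)⁻¹ * B a.w b.w) + c.z
              + (2 : F)⁻¹ * B (a.w + b.w) c.w⟩ : Heisenberg F m) =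
        ⟨a.w + (b.w + c.w), a.z + (b.z + c.z + (2 : F)⁻¹ * B b.w c.w)
              + (2 : F)⁻¹ * B a.w (b.w + c.w)⟩
      simp only [Heisenberg.mk.injEq, map_add, LinearMap.add_apply]
      exact ⟨add_assoc _ _ _, by ring⟩
    one_mul := fun a => by
      show (⟨0 + a.w, 0 + a.z + (2 : F)⁻¹ * B 0 a.w⟩ : Heisenberg F m) = a
      cases a
      simp
    mul_one := fun a => by
      show (⟨a.w + 0, a.z + 0 + (2 : F)⁻¹ * B a.w 0⟩ : Heisenberg F m) = a
      cases a
      simp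
    inv_mul_cancel := fun a => by
      show (⟨-a.w + a.w, -a.z + a.z + (2 : F)⁻¹ * B (-a.w) a.w⟩ : Heisenberg F m) = ⟨0, 0⟩
      simp [halt a.w] }

noncomputable section

open CategoryTheory LinearMap Module

namespace SvN

/-- `Heisenberg F m` is just a product as a set. -/
def heisEquiv (F : Type) (m : ℕ) : Heisenberg F m ≃ (Fin m → F) × F where
  toFun h := (h.w, h.z)
  invFun p := ⟨p.1, p.2⟩
  left_inv _ := rfl
  right_inv _ := rfl

instance (F : Type) [Fintype F] (m : ℕ) : Fintype (Heisenberg F m) :=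
  Fintype.ofEquiv _ (heisEquiv F m).symm

lemma heisCard (F : Type) [Fintype F] (m : ℕ) :
    Fintype.card (Heisenberg F m) = Fintype.card F ^ m * Fintype.card F := by
  rw [Fintype.card_congr (heisEquiv F m)]
  simp

variable {k G : Type} [Field k] [Monoid G]

/-- Restriction of a representation to an invariant submodule. -/
def subRep {V : Type} [AddCommGroup V] [Module k V] (ρ : Representation k G V)
    (p : Submodule k V) (hp : ∀ g x, x ∈ p → ρ g x ∈ p) : Representation k G p where
  toFun g := (ρ g).restrict (fun x hx => hp g x hx)
  map_one' := by
    refine LinearMap.ext fun x => Subtype.ext ?_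
    simp [LinearMap.restrict_apply]
  map_mul' g h := by
    refine LinearMap.ext fun x => Subtype.ext ?_
    simp [LinearMap.restrict_apply]

@[simp] lemma subRep_apply {V : Type} [AddCommGroup V] [Module k V] (ρ : Representation k G V)
    (p : Submodule k V) (hp : ∀ g x, x ∈ p → ρ g x ∈ p) (g : G) (x : p) :
    (subRep ρ p hp g x : V) = ρ g (x : V) := rfl

lemma fdRep_hom_comm_apply {X Y : FDRep k G} (f : X ⟶ Y) (g : G) (x : X) :
    f.hom (X.ρ g x) = Y.ρ g (f.hom x) :=
  ConcreteCategory.congr_hom (f.comm g) x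

/-- A nonzero f.d. representation with no nontrivial invariant submodules is simple. -/
lemma simple_of_invariants (V : FDRep k G) (hV : ∃ v : V, v ≠ 0)
    (h : ∀ p : Submodule k V, (∀ g x, x ∈ p → V.ρ g x ∈ p) → p = ⊥ ∨ p = ⊤) :
    Simple V := by
  constructor
  intro Y f hf
  constructor
  · intro hiso hf0
    obtain ⟨v, hv⟩ := hV
    apply hv
    have hh : f.hom = 0 := by rw [hf0]; rfl
    calc v = Action.Hom.hom (𝟙 V) v := rfl
      _ = Action.Hom.hom (inv f ≫ f) v := by rw [IsIso.inv_hom_id]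
      _ = f.hom (Action.Hom.hom (inv f) v) := rfl
      _ = 0 := by rw [hh]; rfl
  · intro hf0
    have hfh : f.hom ≠ 0 := by
      intro h0
      exact hf0 (Action.hom_ext f 0 h0)
    have hkinv : ∀ g x, x ∈ LinearMap.ker f.hom.hom.hom → Y.ρ g x ∈ LinearMap.ker f.hom.hom.hom := by
      intro g x hx
      rw [LinearMap.mem_ker] at hx ⊢
      exact (fdRep_hom_comm_apply f g x).trans (by erw [hx, map_zero])
    let K : FDRep k G := FDRep.of (subRep Y.ρ (LinearMap.ker f.hom.hom.hom) hkinv)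
    let ι : K ⟶ Y := ⟨FGModuleCat.ofHom (LinearMap.ker f.hom.hom.hom).subtype, fun g => rfl⟩
    have hι : ι ≫ f = 0 := by
      apply Action.hom_ext
      refine ConcreteCategory.hom_ext _ _ fun (x : LinearMap.ker f.hom.hom.hom) => ?_
      show f.hom x.1 = (0 : K ⟶ V).hom x
      have hx : f.hom x.1 = 0 := x.2
      rw [hx, Action.zero_hom]
      rfl
    have hι0 : ι = 0 := (cancel_mono f).mp (by simp [hι])
    have hinj : Function.Injective f.hom := by
      rw [← LinearMap.ker_eq_bot, Submodule.eq_bot_iff]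
      intro x hx
      have h3 := congrArg (fun φ : K ⟶ Y => Action.Hom.hom φ ⟨x, hx⟩) hι0
      exact h3
    have hrinv : ∀ g y, y ∈ LinearMap.range f.hom.hom.hom → V.ρ g y ∈ LinearMap.range f.hom.hom.hom := by
      rintro g y ⟨x, rfl⟩
      exact ⟨Y.ρ g x, (fdRep_hom_comm_apply f g x)⟩
    have hsur : Function.Surjective f.hom := by
      rw [← LinearMap.range_eq_top]
      rcases h (LinearMap.range f.hom.hom.hom) hrinv with h1 | h1
      · exact absurd (LinearMap.range_eq_bot.mp h1)
          (fun h0 => hfh (ConcreteCategory.hom_ext _ _ fun x => LinearMap.congr_fun h0 x))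
      · exact h1
    let e : Y ≃ₗ[k] V := LinearEquiv.ofBijective f.hom.hom.hom ⟨hinj, hsur⟩
    have hcomm : ∀ g : G, ∀ v : V, e.symm (V.ρ g v) = Y.ρ g (e.symm v) := by
      intro g v
      apply hinj
      have h1 : ∀ w : V, f.hom (e.symm w) = w := fun w => e.apply_symm_apply w
      rw [h1, fdRep_hom_comm_apply f g (e.symm v), h1]
    refine ⟨⟨⟨FGModuleCat.ofHom (e.symm : V →ₗ[k] Y), fun g => ?_⟩, ?_, ?_⟩⟩
    · refine ConcreteCategory.hom_ext _ _ fun v => ?_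
      exact hcomm g v
    · refine Action.hom_ext _ _ (ConcreteCategory.hom_ext _ _ fun x => ?_)
      show e.symm (f.hom x) = x
      exact e.symm_apply_apply x
    · refine Action.hom_ext _ _ (ConcreteCategory.hom_ext _ _ fun v => ?_)
      show f.hom (e.symm v) = v
      exact e.apply_symm_apply v

end SvN
namespace SvN

/-- The underlying linear map of the Schrödinger-type representation. -/
def heisRepAux {F : Type} [Field F] {m : ℕ} (B : LinearMap.BilinForm F (Fin m → F))
    (ψ : AddChar F ℂ) (g : Heisenberg F m) :
    ((Fin m → F) → ℂ) →ₗ[ℂ] ((Fin m → F) → ℂ) where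
  toFun f := fun x => ψ (g.z + (2 : F)⁻¹ * B x g.w) * f (x + g.w)
  map_add' f₁ f₂ := by funext x; simp [mul_add]
  map_smul' c f := by funext x; simp [smul_eq_mul]; ring

theorem heisRep_exists {F : Type} [Field F] {m : ℕ} (B : LinearMap.BilinForm F (Fin m → F))
    (halt : B.IsAlt) (ψ : AddChar F ℂ) :
    letI := heisGroup B halt
    ∃ ρ : Representation ℂ (Heisenberg F m) ((Fin m → F) → ℂ),
      ∀ g f x, ρ g f x = ψ (g.z + (2 : F)⁻¹ * B x g.w) * f (x + g.w) := by
  letI := heisGroup B halt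
  refine ⟨⟨⟨heisRepAux B ψ, ?_⟩, ?_⟩, fun g f x => rfl⟩
  · refine LinearMap.ext fun f => funext fun x => ?_
    show ψ ((1 : Heisenberg F m).z + (2 : F)⁻¹ * B x (1 : Heisenberg F m).w)
        * f (x + (1 : Heisenberg F m).w) = f x
    have h1 : (1 : Heisenberg F m).w = 0 := rfl
    have h2 : (1 : Heisenberg F m).z = 0 := rfl
    rw [h1, h2]
    simp
  · intro g g'
    refine LinearMap.ext fun f => funext fun x => ?_
    show ψ ((g * g').z + (2 : F)⁻¹ * B x (g * g').w) * f (x + (g * g').w)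
      = ψ (g.z + (2 : F)⁻¹ * B x g.w)
        * (ψ (g'.z + (2 : F)⁻¹ * B (x + g.w) g'.w) * f ((x + g.w) + g'.w))
    have hw : (g * g').w = g.w + g'.w := rfl
    have hz : (g * g').z = g.z + g'.z + (2 : F)⁻¹ * B g.w g'.w := rfl
    rw [hw, hz, ← mul_assoc, ← AddChar.map_add_eq_mul]
    congr 1
    · congr 1
      simp only [map_add, LinearMap.add_apply]
      ring
    · rw [add_assoc]

end SvN

open SvN CategoryTheory LinearMap Module

/-- Stone–von Neumann over `𝔽_q`: for a nontrivial additive character `ψ` of the center,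
there is, up to equivalence, a unique irreducible complex representation of the Heisenberg
group `H = 𝔽_q^{2n} × 𝔽_q` with central character `ψ`, and its dimension is `q^n`. -/
theorem stone_von_neumann (q : ℕ) (hq : Odd q) (F : Type) [Field F] [Fintype F]
    (hcard : Fintype.card F = q) (n : ℕ) (hn : 0 < n)
    (B : LinearMap.BilinForm F (Fin (2 * n) → F)) (halt : B.IsAlt)
    (hnd : B.SeparatingLeft) (ψ : AddChar F ℂ) (hψ : ψ ≠ 1) :
    letI : Group (Heisenberg F (2 * n)) := heisGroup B halt
    ∃ V : FDRep ℂ (Heisenberg F (2 * n)),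
      CategoryTheory.Simple V ∧
      (∀ z : F, V.ρ ⟨0, z⟩ = ψ z • (LinearMap.id : V →ₗ[ℂ] V)) ∧
      Module.finrank ℂ V = q ^ n ∧
      ∀ W : FDRep ℂ (Heisenberg F (2 * n)), CategoryTheory.Simple W →
        (∀ z : F, W.ρ ⟨0, z⟩ = ψ z • (LinearMap.id : W →ₗ[ℂ] W)) →
        Nonempty (W ≅ V) := by
  letI : Group (Heisenberg F (2 * n)) := heisGroup B halt
  classical
  -- 2 ≠ 0 in F
  have h2F : (2 : F) ≠ 0 := by
    intro h20
    have hdvd : ringChar F ∣ 2 := ringChar.dvd (by exact_mod_cast h20)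
    have hr2 : ringChar F = 2 := by
      rcases (Nat.prime_two.eq_one_or_self_of_dvd _ hdvd) with h | h
      · exact absurd h (CharP.ringChar_ne_one)
      · exact h
    have heven := FiniteField.even_card_iff_char_two.mp hr2
    rw [hcard] at heven
    have hodd := Nat.odd_iff.mp hq
    omega
  -- surjectivity of pairing against a nonzero vector
  have hψsur : ∀ w : Fin (2 * n) → F, w ≠ 0 → ∀ c : F, ∃ v, B v w = c := by
    intro w hw c
    obtain ⟨y, hy⟩ : ∃ y, B w y ≠ 0 := by
      by_contra hall
      push_neg at hall
      exact hw (hnd w hall)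
    refine ⟨(-(c / B w y)) • y, ?_⟩
    rw [map_smul, LinearMap.smul_apply, smul_eq_mul]
    have hyw : B y w = -B w y := (LinearMap.IsAlt.neg halt w y).symm
    rw [hyw]
    field_simp
  obtain ⟨c₀, hc₀⟩ : ∃ c, ψ c ≠ 1 := AddChar.ne_one_iff.mp hψ
  -- group law helpers
  have hmul : ∀ a b : Heisenberg F (2 * n),
      a * b = ⟨a.w + b.w, a.z + b.z + (2 : F)⁻¹ * B a.w b.w⟩ := fun _ _ => rfl
  have hinv : ∀ a : Heisenberg F (2 * n), a⁻¹ = ⟨-a.w, -a.z⟩ := fun _ => rfl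
  -- character on the center
  have hcent_char : ∀ V : FDRep ℂ (Heisenberg F (2 * n)),
      (∀ z : F, V.ρ ⟨0, z⟩ = ψ z • (LinearMap.id : V →ₗ[ℂ] V)) →
      ∀ z : F, V.character ⟨0, z⟩ = (finrank ℂ V : ℂ) * ψ z := by
    intro V hV z
    have h0 : V.character ⟨0, z⟩ = LinearMap.trace ℂ V (V.ρ ⟨0, z⟩) := rfl
    rw [h0, hV z, map_smul, LinearMap.trace_id, smul_eq_mul, mul_comm]
  -- character vanishes off the center
  have hvanish : ∀ V : FDRep ℂ (Heisenberg F (2 * n)),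
      (∀ z : F, V.ρ ⟨0, z⟩ = ψ z • (LinearMap.id : V →ₗ[ℂ] V)) →
      ∀ g : Heisenberg F (2 * n), g.w ≠ 0 → V.character g = 0 := by
    intro V hV g hgw
    have ha : ∀ c : F, V.character ⟨g.w, g.z + c⟩ = ψ c * V.character g := by
      intro c
      have hprod : (⟨0, c⟩ : Heisenberg F (2 * n)) * g = ⟨g.w, g.z + c⟩ := by
        rw [hmul]
        simp only [Heisenberg.mk.injEq]
        constructor
        · simp
        · simp [add_comm]
      have h0 : V.character ((⟨0, c⟩ : Heisenberg F (2 * n)) * g)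
          = LinearMap.trace ℂ V (V.ρ ⟨0, c⟩ * V.ρ g) := by
        have : V.character ((⟨0, c⟩ : Heisenberg F (2 * n)) * g)
            = LinearMap.trace ℂ V (V.ρ ((⟨0, c⟩ : Heisenberg F (2 * n)) * g)) := rfl
        rw [this, map_mul]
      have h1 : V.ρ ⟨0, c⟩ * V.ρ g = ψ c • V.ρ g := by
        rw [hV c]
        ext v
        simp
      rw [← hprod, h0, h1, map_smul, smul_eq_mul]
      rfl
    have hb : ∀ v : Fin (2 * n) → F, V.character ⟨g.w, g.z + B v g.w⟩ = V.character g := by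
      intro v
      have hconj : (⟨v, 0⟩ : Heisenberg F (2 * n)) * g * (⟨v, 0⟩ : Heisenberg F (2 * n))⁻¹
          = ⟨g.w, g.z + B v g.w⟩ := by
        rw [hinv, hmul, hmul]
        simp only [Heisenberg.mk.injEq]
        constructor
        · abel
        · have hB : B (v + g.w) (-v) = B v g.w := by
            simp only [map_add, map_neg, LinearMap.add_apply, LinearMap.neg_apply]
            rw [halt v, zero_add, LinearMap.IsAlt.neg halt g.w v]
          rw [hB]
          field_simp
          ring
      have hcc := FDRep.char_conj V g ⟨v, 0⟩
      rw [hconj] at hcc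
      exact hcc
    obtain ⟨v, hv⟩ := hψsur g.w hgw c₀
    have h1 : V.character g = ψ c₀ * V.character g := by
      calc V.character g = V.character ⟨g.w, g.z + B v g.w⟩ := (hb v).symm
        _ = V.character ⟨g.w, g.z + c₀⟩ := by rw [hv]
        _ = ψ c₀ * V.character g := ha c₀
    have h2 : (ψ c₀ - 1) * V.character g = 0 := by
      rw [sub_mul, one_mul, ← h1, sub_self]
    rcases mul_eq_zero.mp h2 with h3 | h3
    · exact absurd (sub_eq_zero.mp h3) hc₀
    · exact h3
  -- the sum of characters
  have hsum : ∀ V W : FDRep ℂ (Heisenberg F (2 * n)),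
      (∀ z : F, V.ρ ⟨0, z⟩ = ψ z • (LinearMap.id : V →ₗ[ℂ] V)) →
      (∀ z : F, W.ρ ⟨0, z⟩ = ψ z • (LinearMap.id : W →ₗ[ℂ] W)) →
      ∑ g : Heisenberg F (2 * n), W.character g * V.character g⁻¹
        = (Fintype.card F : ℂ) * (finrank ℂ W : ℂ) * (finrank ℂ V : ℂ) := by
    intro V W hV hW
    rw [← Equiv.sum_comp (heisEquiv F (2 * n)).symm
        (fun g => W.character g * V.character g⁻¹), Fintype.sum_prod_type]
    have hzero : ∀ w ∈ Finset.univ, w ≠ (0 : Fin (2 * n) → F) →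
        (∑ z : F, W.character ((heisEquiv F (2 * n)).symm (w, z))
          * V.character (((heisEquiv F (2 * n)).symm (w, z))⁻¹)) = 0 := by
      intro w _ hw
      refine Finset.sum_eq_zero fun z _ => ?_
      exact mul_eq_zero_of_left (hvanish W hW ⟨w, z⟩ hw) _
    rw [Finset.sum_eq_single (0 : Fin (2 * n) → F) hzero
      (fun h => absurd (Finset.mem_univ _) h)]
    have hinve : ∀ z : F, ((heisEquiv F (2 * n)).symm (0, z))⁻¹
        = (⟨0, -z⟩ : Heisenberg F (2 * n)) := by
      intro z
      rw [hinv]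
      simp only [Heisenberg.mk.injEq]
      exact ⟨neg_zero, rfl⟩
    calc ∑ z : F, W.character ((heisEquiv F (2 * n)).symm (0, z))
          * V.character (((heisEquiv F (2 * n)).symm (0, z))⁻¹)
        = ∑ z : F, (finrank ℂ W : ℂ) * (finrank ℂ V : ℂ) := by
          refine Finset.sum_congr rfl fun z _ => ?_
          rw [hinve z]
          have hWz : W.character ((heisEquiv F (2 * n)).symm (0, z))
              = (finrank ℂ W : ℂ) * ψ z := hcent_char W hW z
          rw [hWz, hcent_char V hV (-z)]
          have hψz : ψ z * ψ (-z) = 1 := by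
            rw [← AddChar.map_add_eq_mul, add_neg_cancel, AddChar.map_zero_eq_one]
          calc (finrank ℂ W : ℂ) * ψ z * ((finrank ℂ V : ℂ) * ψ (-z))
              = (finrank ℂ W : ℂ) * (finrank ℂ V : ℂ) * (ψ z * ψ (-z)) := by ring
            _ = (finrank ℂ W : ℂ) * (finrank ℂ V : ℂ) := by rw [hψz, mul_one]
      _ = (Fintype.card F : ℂ) * (finrank ℂ W : ℂ) * (finrank ℂ V : ℂ) := by
          rw [Finset.sum_const, Finset.card_univ, nsmul_eq_mul]
          ring
  -- orthogonality, specialised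
  haveI hne : Nonempty (Heisenberg F (2 * n)) := ⟨⟨0, 0⟩⟩
  let G₀ : GrpCat := GrpCat.of (Heisenberg F (2 * n))
  letI hinvert : Invertible ((Fintype.card (Heisenberg F (2 * n)) : ℕ) : ℂ) :=
    invertibleOfNonzero (Nat.cast_ne_zero.mpr Fintype.card_ne_zero)
  have horth : ∀ V W : FDRep ℂ (Heisenberg F (2 * n)), Simple V → Simple W →
      (⅟(Fintype.card (Heisenberg F (2 * n)) : ℂ))
          • ∑ g : Heisenberg F (2 * n), W.character g * V.character g⁻¹
        = if Nonempty (W ≅ V) then (1 : ℂ) else (0 : ℂ) := by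
    intro V W hSV hSW
    haveI := hSV
    haveI := hSW
    have h := FDRep.char_orthonormal W V
    simpa [Nat.card_eq_fintype_card, invOf_eq_inv, smul_eq_mul] using h
  -- dimension of any simple rep with central character ψ
  have hdim : ∀ V : FDRep ℂ (Heisenberg F (2 * n)), Simple V →
      (∀ z : F, V.ρ ⟨0, z⟩ = ψ z • (LinearMap.id : V →ₗ[ℂ] V)) →
      finrank ℂ V = q ^ n := by
    intro V hS hc
    have h1 := horth V V hS hS
    rw [hsum V V hc hc, if_pos ⟨Iso.refl V⟩, smul_eq_mul] at h1
    have h2 : (Fintype.card F : ℂ) * (finrank ℂ V : ℂ) * (finrank ℂ V : ℂ)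
        = ((Fintype.card (Heisenberg F (2 * n)) : ℕ) : ℂ) := by
      have h3 := congrArg (fun t => ((Fintype.card (Heisenberg F (2 * n)) : ℕ) : ℂ) * t) h1
      simp only [← mul_assoc, mul_invOf_self, one_mul, mul_one] at h3
      exact h3
    have h4 : Fintype.card F * finrank ℂ V * finrank ℂ V
        = Fintype.card (Heisenberg F (2 * n)) := by
      exact_mod_cast h2
    rw [heisCard, hcard, mul_assoc] at h4
    have hq0 : 0 < q := by rw [← hcard]; exact Fintype.card_pos
    have h5 : finrank ℂ V * finrank ℂ V = q ^ (2 * n) :=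
      Nat.eq_of_mul_eq_mul_left hq0 (h4.trans (mul_comm _ _))
    have h6 : finrank ℂ V ^ 2 = (q ^ n) ^ 2 := by
      rw [pow_two, pow_two, h5, ← pow_add, two_mul]
    exact Nat.pow_left_injective (by norm_num) h6
  -- existence of a simple rep with central character ψ
  obtain ⟨ρM, hρM⟩ := heisRep_exists B halt ψ
  have hcentM : ∀ z : F, ∀ f : (Fin (2 * n) → F) → ℂ, ρM ⟨0, z⟩ f = ψ z • f := by
    intro z f
    funext x
    rw [hρM]
    show ψ (z + (2 : F)⁻¹ * B x 0) * f (x + 0) = _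
    simp
  set S : Set (Submodule ℂ ((Fin (2 * n) → F) → ℂ))
    := {p | p ≠ ⊥ ∧ ∀ g x, x ∈ p → ρM g x ∈ p} with hS
  have hTopS : (⊤ : Submodule ℂ ((Fin (2 * n) → F) → ℂ)) ∈ S := by
    constructor
    · intro h
      exact absurd h.symm (by exact bot_ne_top)
    · intro g x _
      exact Submodule.mem_top
  obtain ⟨p, hpS, hpmin⟩ : ∃ p ∈ S, ∀ r ∈ S, finrank ℂ p ≤ finrank ℂ r := by
    have hTne : {d | ∃ p ∈ S, finrank ℂ p = d}.Nonempty := ⟨_, ⊤, hTopS, rfl⟩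
    obtain ⟨p, hpS, hpd⟩ := Nat.sInf_mem hTne
    exact ⟨p, hpS, fun r hr => by rw [hpd]; exact Nat.sInf_le ⟨r, hr, rfl⟩⟩
  let Vrep : FDRep ℂ (Heisenberg F (2 * n)) := FDRep.of (subRep ρM p hpS.2)
  have hVcent : ∀ z : F, Vrep.ρ ⟨0, z⟩ = ψ z • (LinearMap.id : Vrep →ₗ[ℂ] Vrep) := by
    intro z
    refine LinearMap.ext fun (v : p) => Subtype.ext ?_
    show ρM ⟨0, z⟩ v.1 = ψ z • (v.1 : (Fin (2 * n) → F) → ℂ)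
    rw [hcentM z]
  have hVsimple : Simple Vrep := by
    apply simple_of_invariants
    · obtain ⟨x, hxp, hx0⟩ := Submodule.exists_mem_ne_zero_of_ne_bot hpS.1
      exact ⟨⟨x, hxp⟩, fun h => hx0 (congrArg Subtype.val h)⟩
    · intro qs hqs
      by_cases hbot : Submodule.map p.subtype qs = ⊥
      · left
        exact Submodule.map_injective_of_injective p.injective_subtype
          (by rw [hbot, Submodule.map_bot])
      · right
        have hqsS : Submodule.map p.subtype qs ∈ S := by
          refine ⟨hbot, ?_⟩
          rintro g x ⟨y, hy, rfl⟩
          exact ⟨subRep ρM p hpS.2 g y, hqs g y hy, rfl⟩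
        have hle : Submodule.map p.subtype qs ≤ p := Submodule.map_subtype_le p qs
        have heq : Submodule.map p.subtype qs = p :=
          Submodule.eq_of_le_of_finrank_le hle (hpmin _ hqsS)
        apply Submodule.map_injective_of_injective p.injective_subtype
        rw [heq, Submodule.map_subtype_top]
  refine ⟨Vrep, hVsimple, hVcent, hdim Vrep hVsimple hVcent, ?_⟩
  intro W hSW hWc
  have h1 := horth Vrep W hVsimple hSW
  rw [hsum Vrep W hVcent hWc, hdim Vrep hVsimple hVcent, hdim W hSW hWc] at h1
  by_contra hno
  rw [if_neg hno, smul_eq_mul] at h1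
  have hq0 : 0 < q := by rw [← hcard]; exact Fintype.card_pos
  have hX : (Fintype.card F : ℂ) * ((q ^ n : ℕ) : ℂ) * ((q ^ n : ℕ) : ℂ) ≠ 0 := by
    have : (Fintype.card F : ℂ) ≠ 0 := Nat.cast_ne_zero.mpr Fintype.card_ne_zero
    have hqn : ((q ^ n : ℕ) : ℂ) ≠ 0 := Nat.cast_ne_zero.mpr (pow_pos hq0 n).ne'
    exact mul_ne_zero (mul_ne_zero this hqn) hqn
  apply hX
  have h5 := congrArg
    (fun t => ((Fintype.card (Heisenberg F (2 * n)) : ℕ) : ℂ) * t) h1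
  simpa [mul_invOf_cancel_left] using h5
end
end
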